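/- Let π and π̃ be probability measures on ℝ^d and P a transition kernel on ℝ^d such that, with ν(dx dy) := P(x, dy) π(dx), ν̃(dx dy) := P(x, dy) π̃(dx) and their swaps ν^⊤, ν̃^⊤, the minima ν ∧ ν^⊤ and ν̃ ∧ ν̃^⊤ are well-defined (i.e., ν^⊤ ≪ ν and ν̃^⊤ ≪ ν̃). Then d_TV(ν ∧ ν^⊤, ν̃ ∧ ν̃^⊤) ≤ 2 d_TV(π, π̃) and d_H(ν ∧ ν^⊤, ν̃ ∧ ν̃^⊤) ≤ 2 d_H(π, π̃). -/

import Mathlib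

open MeasureTheory ProbabilityTheory
open scoped ENNReal NNReal

/-- The total variation distance `d_TV(μ, ν) = ½ ∫ |dμ/dη − dν/dη| dη` computed w.r.t. the
dominating measure `η = μ + ν`. -/
noncomputable def tvDist {α : Type*} [MeasurableSpace α] (μ ν : Measure α) : ℝ :=
  (1 / 2) * ∫ x, |(μ.rnDeriv (μ + ν) x).toReal - (ν.rnDeriv (μ + ν) x).toReal| ∂(μ + ν)

/-- The Hellinger distance `d_H(μ, ν) = (∫ |√(dμ/dη) − √(dν/dη)|² dη)^{1/2}` computed w.r.t.
the dominating measure `η = μ + ν`. -/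
noncomputable def hellingerDist {α : Type*} [MeasurableSpace α] (μ ν : Measure α) : ℝ :=
  Real.sqrt (∫ x, (Real.sqrt (μ.rnDeriv (μ + ν) x).toReal
    - Real.sqrt (ν.rnDeriv (μ + ν) x).toReal) ^ 2 ∂(μ + ν))

/-!
Both distances are built from `∫ φ(dμ/dη, dν/dη) dη` with `φ` positively homogeneous, which
therefore does not depend on the dominating measure `η`. Over `η = ν + ν̃ + ν^⊤ + ν̃^⊤` the
densities of the minimum measures are pointwise minima, and both choices of `φ` satisfy
`φ(a ∧ b, c ∧ d) ≤ φ(a, c) + φ(b, d)`. This bounds the integral for the minima by the integral for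
`(ν, ν̃)` plus the one for `(ν^⊤, ν̃^⊤)`. Swapping coordinates and composing with the common kernel
`P` preserve the integral, so both terms equal the one for `(π, π̃)`. For the Hellinger distance
this even gives the constant `√2`.
-/

section PairDivergence

variable {α β : Type*} {mα : MeasurableSpace α} {mβ : MeasurableSpace β}

noncomputable def pairDivergence (φ : ℝ → ℝ → ℝ) (μ ν : Measure α) : ℝ :=
  ∫ x, φ (μ.rnDeriv (μ + ν) x).toReal (ν.rnDeriv (μ + ν) x).toReal ∂(μ + ν)

theorem measurable_comp_rnDeriv {φ : ℝ → ℝ → ℝ} (hφ : Measurable (Function.uncurry φ))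
    (μ ν η : Measure α) : Measurable fun x => φ (μ.rnDeriv η x).toReal (ν.rnDeriv η x).toReal :=
  hφ.comp ((Measure.measurable_rnDeriv μ η).ennreal_toReal.prodMk
    (Measure.measurable_rnDeriv ν η).ennreal_toReal)

theorem pairDivergence_eq_integral_rnDeriv {φ : ℝ → ℝ → ℝ}
    (hφ : ∀ w a b : ℝ, 0 ≤ w → φ (w * a) (w * b) = w * φ a b)
    {μ ν η : Measure α} [IsFiniteMeasure μ] [IsFiniteMeasure ν] [SigmaFinite η]
    (hμ : μ ≪ η) (hν : ν ≪ η) :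
    pairDivergence φ μ ν = ∫ x, φ (μ.rnDeriv η x).toReal (ν.rnDeriv η x).toReal ∂η := by
  have hμν : μ + ν ≪ η := hμ.add_left hν
  rw [pairDivergence, ← integral_rnDeriv_smul hμν]
  refine integral_congr_ae ?_
  -- chain rule through `μ + ν`; homogeneity pulls out the common factor `d(μ + ν)/dη`
  filter_upwards
    [Measure.rnDeriv_mul_rnDeriv (ν := μ + ν) (κ := η)
        (Measure.AbsolutelyContinuous.rfl.add_right ν),
      Measure.rnDeriv_mul_rnDeriv (ν := μ + ν) (κ := η)
        (Measure.AbsolutelyContinuous.rfl.add_right' μ)] with x hμx hνx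
  rw [smul_eq_mul, ← hφ _ _ _ ENNReal.toReal_nonneg, ← hμx, ← hνx, Pi.mul_apply, Pi.mul_apply,
    ENNReal.toReal_mul, ENNReal.toReal_mul, mul_comm, mul_comm (ν.rnDeriv _ x).toReal]

theorem pairDivergence_map {φ : ℝ → ℝ → ℝ} (hφ : Measurable (Function.uncurry φ))
    {f : α → β} (hf : MeasurableEmbedding f) (μ ν : Measure α) [IsFiniteMeasure μ]
    [IsFiniteMeasure ν] :
    pairDivergence φ (μ.map f) (ν.map f) = pairDivergence φ μ ν := by
  rw [pairDivergence, ← Measure.map_add _ _ hf.measurable,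
    integral_map hf.measurable.aemeasurable
      (measurable_comp_rnDeriv hφ _ _ _).aestronglyMeasurable]
  refine integral_congr_ae ?_
  filter_upwards [hf.rnDeriv_map μ (μ + ν), hf.rnDeriv_map ν (μ + ν)] with x hμx hνx
  rw [hμx, hνx]

theorem pairDivergence_compProd {φ : ℝ → ℝ → ℝ} (hφ : Measurable (Function.uncurry φ))
    (μ ν : Measure α) [IsFiniteMeasure μ] [IsFiniteMeasure ν] (κ : Kernel α β)
    [IsMarkovKernel κ] :
    pairDivergence φ (μ ⊗ₘ κ) (ν ⊗ₘ κ) = pairDivergence φ μ ν := by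
  rw [pairDivergence, ← Measure.compProd_add_left]
  calc ∫ p, φ ((μ ⊗ₘ κ).rnDeriv ((μ + ν) ⊗ₘ κ) p).toReal
        ((ν ⊗ₘ κ).rnDeriv ((μ + ν) ⊗ₘ κ) p).toReal ∂((μ + ν) ⊗ₘ κ)
      = ∫ p, φ (μ.rnDeriv (μ + ν) p.1).toReal (ν.rnDeriv (μ + ν) p.1).toReal
          ∂((μ + ν) ⊗ₘ κ) := by
        refine integral_congr_ae ?_
        filter_upwards [rnDeriv_measure_compProd_left μ (μ + ν) κ,
          rnDeriv_measure_compProd_left ν (μ + ν) κ] with p hμp hνp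
        rw [hμp, hνp]
    _ = ∫ x, φ (μ.rnDeriv (μ + ν) x).toReal (ν.rnDeriv (μ + ν) x).toReal
          ∂((μ + ν) ⊗ₘ κ).fst :=
        (integral_map measurable_fst.aemeasurable
          (measurable_comp_rnDeriv hφ _ _ _).aestronglyMeasurable).symm
    _ = pairDivergence φ μ ν := by rw [Measure.fst_compProd, pairDivergence]

theorem withDensity_inf_withDensity (η : Measure α) {f g : α → ℝ≥0∞} (hf : Measurable f)
    (hg : Measurable g) :
    η.withDensity f ⊓ η.withDensity g = η.withDensity fun x => min (f x) (g x) := by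
  refine le_antisymm (Measure.le_iff.mpr fun s hs => ?_)
    (le_inf (withDensity_mono (.of_forall fun x => min_le_left _ _))
      (withDensity_mono (.of_forall fun x => min_le_right _ _)))
  have ht : MeasurableSet {x | f x ≤ g x} := measurableSet_le hf hg
  set t := {x | f x ≤ g x}
  rw [Measure.inf_apply hs]
  refine le_trans (sInf_le ⟨t, rfl⟩) (le_of_eq ?_)
  rw [withDensity_apply _ hs, withDensity_apply _ (ht.inter hs),
    withDensity_apply _ (ht.compl.inter hs), ← lintegral_inter_add_sdiff _ s ht,
    Set.inter_comm s t, Set.sdiff_eq_compl_inter]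
  congr 1
  · exact setLIntegral_congr_fun (ht.inter hs) fun x hx => (min_eq_left hx.1).symm
  · exact setLIntegral_congr_fun (ht.compl.inter hs) fun x hx =>
      (min_eq_right (not_le.mp (show ¬f x ≤ g x from hx.1)).le).symm

theorem rnDeriv_inf_ae_eq {μ ν η : Measure α} [IsFiniteMeasure μ] [IsFiniteMeasure ν]
    [SigmaFinite η] (hμ : μ ≪ η) (hν : ν ≪ η) :
    (μ ⊓ ν).rnDeriv η =ᵐ[η] fun x => min (μ.rnDeriv η x) (ν.rnDeriv η x) := by
  have h := withDensity_inf_withDensity η (μ.measurable_rnDeriv η) (ν.measurable_rnDeriv η)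
  rw [Measure.withDensity_rnDeriv_eq μ η hμ, Measure.withDensity_rnDeriv_eq ν η hν] at h
  rw [h]
  exact Measure.rnDeriv_withDensity η (by fun_prop)

theorem integrable_comp_rnDeriv {φ : ℝ → ℝ → ℝ} (hφ : Measurable (Function.uncurry φ))
    {C : ℝ} (hφC : ∀ a b : ℝ, 0 ≤ a → 0 ≤ b → |φ a b| ≤ C * (a + b))
    (μ ν η : Measure α) [IsFiniteMeasure μ] [IsFiniteMeasure ν] :
    Integrable (fun x => φ (μ.rnDeriv η x).toReal (ν.rnDeriv η x).toReal) η :=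
  ((Measure.integrable_toReal_rnDeriv.add Measure.integrable_toReal_rnDeriv).const_mul C).mono'
    (measurable_comp_rnDeriv hφ μ ν η).aestronglyMeasurable
    (.of_forall fun _ => hφC _ _ ENNReal.toReal_nonneg ENNReal.toReal_nonneg)

theorem pairDivergence_inf_le {φ : ℝ → ℝ → ℝ}
    (hφ : ∀ w a b : ℝ, 0 ≤ w → φ (w * a) (w * b) = w * φ a b)
    (hφm : Measurable (Function.uncurry φ))
    {C : ℝ} (hφC : ∀ a b : ℝ, 0 ≤ a → 0 ≤ b → |φ a b| ≤ C * (a + b))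
    (hφ_min : ∀ a b c d : ℝ, φ (min a b) (min c d) ≤ φ a c + φ b d)
    (μ₁ μ₂ ν₁ ν₂ : Measure α) [IsFiniteMeasure μ₁] [IsFiniteMeasure μ₂] [IsFiniteMeasure ν₁]
    [IsFiniteMeasure ν₂] :
    pairDivergence φ (μ₁ ⊓ ν₁) (μ₂ ⊓ ν₂) ≤ pairDivergence φ μ₁ μ₂ + pairDivergence φ ν₁ ν₂ := by
  set η := μ₁ + μ₂ + (ν₁ + ν₂)
  have hμ₁ : μ₁ ≪ η := (Measure.AbsolutelyContinuous.rfl.add_right _).add_right _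
  have hμ₂ : μ₂ ≪ η := (Measure.AbsolutelyContinuous.rfl.add_right' _).add_right _
  have hν₁ : ν₁ ≪ η := (Measure.AbsolutelyContinuous.rfl.add_right _).add_right' _
  have hν₂ : ν₂ ≪ η := (Measure.AbsolutelyContinuous.rfl.add_right' _).add_right' _
  have hm₁ : μ₁ ⊓ ν₁ ≪ η := (Measure.absolutelyContinuous_of_le inf_le_left).trans hμ₁
  have hm₂ : μ₂ ⊓ ν₂ ≪ η := (Measure.absolutelyContinuous_of_le inf_le_left).trans hμ₂
  have : IsFiniteMeasure (μ₁ ⊓ ν₁) := isFiniteMeasure_of_le μ₁ inf_le_left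
  have : IsFiniteMeasure (μ₂ ⊓ ν₂) := isFiniteMeasure_of_le μ₂ inf_le_left
  rw [pairDivergence_eq_integral_rnDeriv hφ hm₁ hm₂, pairDivergence_eq_integral_rnDeriv hφ hμ₁ hμ₂,
    pairDivergence_eq_integral_rnDeriv hφ hν₁ hν₂,
    ← integral_add (integrable_comp_rnDeriv hφm hφC _ _ _) (integrable_comp_rnDeriv hφm hφC _ _ _)]
  refine integral_mono_ae (integrable_comp_rnDeriv hφm hφC _ _ _)
    ((integrable_comp_rnDeriv hφm hφC _ _ _).add (integrable_comp_rnDeriv hφm hφC _ _ _)) ?_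
  filter_upwards [rnDeriv_inf_ae_eq hμ₁ hν₁, rnDeriv_inf_ae_eq hμ₂ hν₂,
    μ₁.rnDeriv_lt_top η, μ₂.rnDeriv_lt_top η, ν₁.rnDeriv_lt_top η, ν₂.rnDeriv_lt_top η]
    with x hm₁x hm₂x hμ₁x hμ₂x hν₁x hν₂x
  rw [hm₁x, hm₂x, ENNReal.toReal_min hμ₁x.ne hν₁x.ne, ENNReal.toReal_min hμ₂x.ne hν₂x.ne]
  exact hφ_min _ _ _ _

theorem pairDivergence_compProd_inf_swap_le {φ : ℝ → ℝ → ℝ}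
    (hφ : ∀ w a b : ℝ, 0 ≤ w → φ (w * a) (w * b) = w * φ a b)
    (hφm : Measurable (Function.uncurry φ))
    {C : ℝ} (hφC : ∀ a b : ℝ, 0 ≤ a → 0 ≤ b → |φ a b| ≤ C * (a + b))
    (hφ_min : ∀ a b c d : ℝ, φ (min a b) (min c d) ≤ φ a c + φ b d)
    (μ ν : Measure α) [IsFiniteMeasure μ] [IsFiniteMeasure ν] (κ : Kernel α α)
    [IsMarkovKernel κ] :
    pairDivergence φ (μ ⊗ₘ κ ⊓ (μ ⊗ₘ κ).map Prod.swap) (ν ⊗ₘ κ ⊓ (ν ⊗ₘ κ).map Prod.swap)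
      ≤ 2 * pairDivergence φ μ ν := by
  have hswap : MeasurableEmbedding (Prod.swap : α × α → α × α) :=
    MeasurableEquiv.prodComm.measurableEmbedding
  calc _ ≤ pairDivergence φ (μ ⊗ₘ κ) (ν ⊗ₘ κ)
        + pairDivergence φ ((μ ⊗ₘ κ).map Prod.swap) ((ν ⊗ₘ κ).map Prod.swap) :=
        pairDivergence_inf_le hφ hφm hφC hφ_min _ _ _ _
    _ = 2 * pairDivergence φ μ ν := by
        rw [pairDivergence_map hφm hswap, pairDivergence_compProd hφm, two_mul]

end PairDivergence

theorem sqrt_min_sub_sqrt_min_sq_le (a b c d : ℝ) :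
    (√(min a b) - √(min c d)) ^ 2 ≤ (√a - √c) ^ 2 + (√b - √d) ^ 2 := by
  rw [Real.sqrt_monotone.map_min, Real.sqrt_monotone.map_min, ← sq_abs, ← sq_abs (√a - √c),
    ← sq_abs (√b - √d)]
  calc |min √a √b - min √c √d| ^ 2 ≤ max |√a - √c| |√b - √d| ^ 2 := by
        gcongr; exact abs_min_sub_min_le_max _ _ _ _
    _ ≤ |√a - √c| ^ 2 + |√b - √d| ^ 2 := by
        rcases max_choice |√a - √c| |√b - √d| with h | h <;> rw [h]
        · exact le_add_of_nonneg_right (sq_nonneg _)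
        · exact le_add_of_nonneg_left (sq_nonneg _)

section Distances

variable {α : Type*} [MeasurableSpace α] (μ ν : Measure α) [IsFiniteMeasure μ]
  [IsFiniteMeasure ν] (κ : Kernel α α) [IsMarkovKernel κ]

theorem tvDist_compProd_inf_swap_le :
    tvDist (μ ⊗ₘ κ ⊓ (μ ⊗ₘ κ).map Prod.swap) (ν ⊗ₘ κ ⊓ (ν ⊗ₘ κ).map Prod.swap)
      ≤ 2 * tvDist μ ν := by
  have h := pairDivergence_compProd_inf_swap_le (φ := fun a b => |a - b|) (C := 1)
    (fun w a b hw => by rw [← mul_sub, abs_mul, abs_of_nonneg hw]) (by fun_prop)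
    (fun a b ha hb => by rw [abs_abs, one_mul, abs_le]; constructor <;> linarith)
    (fun a b c d => (abs_min_sub_min_le_max a b c d).trans
      (max_le_add_of_nonneg (abs_nonneg _) (abs_nonneg _))) μ ν κ
  rw [tvDist, tvDist]
  unfold pairDivergence at h
  linarith

theorem hellingerDist_compProd_inf_swap_le :
    hellingerDist (μ ⊗ₘ κ ⊓ (μ ⊗ₘ κ).map Prod.swap) (ν ⊗ₘ κ ⊓ (ν ⊗ₘ κ).map Prod.swap)
      ≤ √2 * hellingerDist μ ν := by
  have h := pairDivergence_compProd_inf_swap_le (φ := fun a b => (√a - √b) ^ 2) (C := 1)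
    (fun w a b hw => by
      rw [Real.sqrt_mul hw, Real.sqrt_mul hw, ← mul_sub, mul_pow, Real.sq_sqrt hw])
    (by fun_prop)
    (fun a b ha hb => by
      rw [abs_sq, one_mul, sub_sq, Real.sq_sqrt ha, Real.sq_sqrt hb]
      nlinarith [Real.sqrt_nonneg a, Real.sqrt_nonneg b])
    sqrt_min_sub_sqrt_min_sq_le μ ν κ
  rw [hellingerDist, hellingerDist, ← Real.sqrt_mul zero_le_two]
  exact Real.sqrt_le_sqrt h

end Distances

theorem tv_hellinger_min_transitionMeasure_general
    {d : ℕ} (π πt : Measure (Fin d → ℝ)) [IsProbabilityMeasure π] [IsProbabilityMeasure πt]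
    (P : Kernel (Fin d → ℝ) (Fin d → ℝ)) [IsMarkovKernel P] :
    tvDist ((π ⊗ₘ P) ⊓ ((π ⊗ₘ P).map Prod.swap)) ((πt ⊗ₘ P) ⊓ ((πt ⊗ₘ P).map Prod.swap))
        ≤ 2 * tvDist π πt ∧
      hellingerDist ((π ⊗ₘ P) ⊓ ((π ⊗ₘ P).map Prod.swap))
          ((πt ⊗ₘ P) ⊓ ((πt ⊗ₘ P).map Prod.swap))
        ≤ 2 * hellingerDist π πt := by
  refine ⟨tvDist_compProd_inf_swap_le π πt P,
    (hellingerDist_compProd_inf_swap_le π πt P).trans ?_⟩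
  have hsqrt_two : √2 ≤ 2 := Real.sqrt_le_iff.mpr ⟨zero_le_two, by norm_num⟩
  exact mul_le_mul_of_nonneg_right hsqrt_two (Real.sqrt_nonneg _)

/-- With `ν(dx dy) := P(x, dy) π(dx)`, `ν̃(dx dy) := P(x, dy) π̃(dx)`, their
swaps `ν^⊤, ν̃^⊤`, and assuming `ν^⊤ ≪ ν`, `ν̃^⊤ ≪ ν̃` (so the minimum measures `ν ⊓ ν^⊤` and
`ν̃ ⊓ ν̃^⊤` are well-defined), one has
`d_TV(ν ∧ ν^⊤, ν̃ ∧ ν̃^⊤) ≤ 2 d_TV(π, π̃)` and `d_H(ν ∧ ν^⊤, ν̃ ∧ ν̃^⊤) ≤ 2 d_H(π, π̃)`. -/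
theorem tv_hellinger_min_transitionMeasure
    {d : ℕ} (π πt : Measure (Fin d → ℝ)) [IsProbabilityMeasure π] [IsProbabilityMeasure πt]
    (P : Kernel (Fin d → ℝ) (Fin d → ℝ)) [IsMarkovKernel P]
    (hac : ((π ⊗ₘ P).map Prod.swap) ≪ (π ⊗ₘ P))
    (hact : ((πt ⊗ₘ P).map Prod.swap) ≪ (πt ⊗ₘ P)) :
    tvDist ((π ⊗ₘ P) ⊓ ((π ⊗ₘ P).map Prod.swap)) ((πt ⊗ₘ P) ⊓ ((πt ⊗ₘ P).map Prod.swap))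
        ≤ 2 * tvDist π πt ∧
      hellingerDist ((π ⊗ₘ P) ⊓ ((π ⊗ₘ P).map Prod.swap))
          ((πt ⊗ₘ P) ⊓ ((πt ⊗ₘ P).map Prod.swap))
        ≤ 2 * hellingerDist π πt :=
  tv_hellinger_min_transitionMeasure_general π πt P
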